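/- arXiv:1811.04515 — 2 statements merged into one kernel-verified Lean document; each statement's English description precedes it below -/
import Mathlib

section
/- Let Ω ⊂ ℝ^N be a bounded open set and g ∈ L¹(ℝ^N∖Ω). Then W^{s,2}_{Ω,g} is a Hilbert space: its norm ‖·‖_{W^{s,2}_{Ω,g}} is induced by an inner product, and every sequence in W^{s,2}_{Ω,g} that is Cauchy with respect to ‖·‖_{W^{s,2}_{Ω,g}} converges in this norm to an element of W^{s,2}_{Ω,g} (functions equal almost everywhere being identified). -/
open MeasureTheory Set Filter Topology
open scoped ENNReal

noncomputable section

/-- Euclidean space `ℝ^N`. -/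
abbrev RN (N : ℕ) := EuclideanSpace ℝ (Fin N)

/-- The normalizing constant `C_{N,s}`. -/
def Cns (N : ℕ) (s : ℝ) : ℝ :=
  s * 2 ^ (2 * s) * Real.Gamma ((2 * s + N) / 2) /
    (Real.pi ^ ((N : ℝ) / 2) * Real.Gamma (1 - s))

/-- The kernel denominator `|x-y|^{N+2s}`. -/
def Kden (N : ℕ) (s : ℝ) (x y : RN N) : ℝ := ‖x - y‖ ^ ((N : ℝ) + 2 * s)

/-- Extended-real squared Gagliardo seminorm of `u` over a set `A ⊆ ℝ^N × ℝ^N`. -/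
def gagE (N : ℕ) (s : ℝ) (A : Set (RN N × RN N)) (u : RN N → ℝ) : ℝ≥0∞ :=
  ∫⁻ p in A, ENNReal.ofReal ((u p.1 - u p.2) ^ 2 / Kden N s p.1 p.2)

/-- Bilinear Gagliardo form of `u, v` over `A ⊆ ℝ^N × ℝ^N` (Bochner integral). -/
def gagB (N : ℕ) (s : ℝ) (A : Set (RN N × RN N)) (u v : RN N → ℝ) : ℝ :=
  ∫ p in A, (u p.1 - u p.2) * (v p.1 - v p.2) / Kden N s p.1 p.2

/-- The set `Q := ℝ^{2N} ∖ (ℝ^N∖Ω)²`. -/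
def QSet {N : ℕ} (Ω : Set (RN N)) : Set (RN N × RN N) := (Ωᶜ ×ˢ Ωᶜ)ᶜ

/-- Membership in `W^{s,2}(ℝ^N)`. -/
def MemWs (N : ℕ) (s : ℝ) (u : RN N → ℝ) : Prop :=
  MemLp u 2 volume ∧ gagE N s univ u < ⊤

/-- Squared `W^{s,2}(ℝ^N)`-norm. -/
def WsNormSq (N : ℕ) (s : ℝ) (u : RN N → ℝ) : ℝ :=
  (∫ x, (u x) ^ 2) + (gagE N s univ u).toReal

/-- Membership in `W^{s,2}_0(Ω̄)`. -/
def MemWs0 (N : ℕ) (s : ℝ) (Ω : Set (RN N)) (u : RN N → ℝ) : Prop :=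
  MemWs N s u ∧ ∀ᵐ x ∂(volume.restrict Ωᶜ), u x = 0

/-- Squared `W^{s,2}_0(Ω̄)`-norm (the full Gagliardo seminorm). -/
def Ws0NormSq (N : ℕ) (s : ℝ) (u : RN N → ℝ) : ℝ := (gagE N s univ u).toReal

/-- Membership in `W^{s,2}(ℝ^N ∖ Ω)`. -/
def MemWsExt (N : ℕ) (s : ℝ) (Ω : Set (RN N)) (z : RN N → ℝ) : Prop :=
  MemLp z 2 (volume.restrict Ωᶜ) ∧ gagE N s (Ωᶜ ×ˢ Ωᶜ) z < ⊤

/-- Squared `W^{s,2}(ℝ^N ∖ Ω)`-norm. -/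
def WsExtNormSq (N : ℕ) (s : ℝ) (Ω : Set (RN N)) (z : RN N → ℝ) : ℝ :=
  (∫ x in Ωᶜ, (z x) ^ 2) + (gagE N s (Ωᶜ ×ˢ Ωᶜ) z).toReal

/-- The interaction operator (nonlocal normal derivative) `𝒩_s`. -/
def Iop (N : ℕ) (s : ℝ) (Ω : Set (RN N)) (u : RN N → ℝ) (x : RN N) : ℝ :=
  Cns N s * ∫ y in Ω, (u x - u y) / Kden N s x y

/-- `F` represents an element of the dual space `W^{-s,2}(Ω̄)` of `W^{s,2}_0(Ω̄)`. -/
structure MemDualWs0 (N : ℕ) (s : ℝ) (Ω : Set (RN N)) (F : (RN N → ℝ) → ℝ) : Prop where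
  congr : ∀ u v, MemWs0 N s Ω u → MemWs0 N s Ω v → u =ᵐ[volume] v → F u = F v
  map_add : ∀ u v, MemWs0 N s Ω u → MemWs0 N s Ω v → F (u + v) = F u + F v
  map_smul : ∀ (c : ℝ) u, MemWs0 N s Ω u → F (c • u) = c * F u
  bdd : ∃ M : ℝ, ∀ u, MemWs0 N s Ω u → |F u| ≤ M * Real.sqrt (Ws0NormSq N s u)

/-- Dual norm on `W^{-s,2}(Ω̄)`. -/
def dualNormWs0 (N : ℕ) (s : ℝ) (Ω : Set (RN N)) (F : (RN N → ℝ) → ℝ) : ℝ :=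
  sInf {M : ℝ | 0 ≤ M ∧ ∀ u, MemWs0 N s Ω u → |F u| ≤ M * Real.sqrt (Ws0NormSq N s u)}

/-- `Ω` has a Lipschitz continuous boundary: near every boundary point, after a rotation
(linear isometry), `Ω` is the region above the graph of a Lipschitz function. -/
def HasLipschitzBoundary {N : ℕ} (Ω : Set (RN N)) : Prop :=
  ∀ x ∈ frontier Ω, ∃ r : ℝ, 0 < r ∧
    ∃ (e : RN N ≃ₗᵢ[ℝ] RN N) (j : Fin N)
      (φ : ({ i : Fin N // i ≠ j } → ℝ) → ℝ) (L : NNReal),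
      LipschitzWith L φ ∧
        ∀ y ∈ Metric.ball x r, (y ∈ Ω ↔ φ (fun i => e y i.1) < e y j)

/-- Weak solution of the Dirichlet exterior value problem
`(−Δ)^s u = F in Ω`, `u = z in ℝ^N∖Ω`. -/
def IsWeakSolDirichlet (N : ℕ) (s : ℝ) (Ω : Set (RN N)) (F : (RN N → ℝ) → ℝ)
    (z u : RN N → ℝ) : Prop :=
  MemWs N s u ∧ (∀ᵐ x ∂(volume.restrict Ωᶜ), u x = z x) ∧
    ∀ v, MemWs0 N s Ω v → Cns N s / 2 * gagB N s univ u v = F v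

/-- `v ∈ V = {v ∈ W^{s,2}_0(Ω̄) : (−Δ)^s v ∈ L²(Ω)}` with fractional Laplacian `w`. -/
def IsFracLapOf (N : ℕ) (s : ℝ) (Ω : Set (RN N)) (v w : RN N → ℝ) : Prop :=
  MemWs0 N s Ω v ∧ MemLp w 2 (volume.restrict Ω) ∧
    ∀ φ, MemWs0 N s Ω φ → Cns N s / 2 * gagB N s univ v φ = ∫ x in Ω, w x * φ x

/-- Very-weak solution of the Dirichlet exterior value problem
`(−Δ)^s u = F in Ω`, `u = z in ℝ^N∖Ω`. -/
def IsVeryWeakSolDirichlet (N : ℕ) (s : ℝ) (Ω : Set (RN N)) (F : (RN N → ℝ) → ℝ)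
    (z u : RN N → ℝ) : Prop :=
  MemLp u 2 volume ∧ (∀ᵐ x ∂(volume.restrict Ωᶜ), u x = z x) ∧
    ∀ v w, IsFracLapOf N s Ω v w →
      ∫ x in Ω, u x * w x = F v - ∫ x in Ωᶜ, z x * Iop N s Ω v x

/-- Membership in `W^{s,2}_{Ω,g}`. -/
def MemWg (N : ℕ) (s : ℝ) (Ω : Set (RN N)) (g : RN N → ℝ) (u : RN N → ℝ) : Prop :=
  Measurable u ∧ (∫⁻ x in Ω, ENNReal.ofReal ((u x) ^ 2)) < ⊤ ∧
    (∫⁻ x in Ωᶜ, ENNReal.ofReal (|g x| * (u x) ^ 2)) < ⊤ ∧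
    gagE N s (QSet Ω) u < ⊤

/-- Squared `W^{s,2}_{Ω,g}`-norm. -/
def WgNormSq (N : ℕ) (s : ℝ) (Ω : Set (RN N)) (g : RN N → ℝ) (u : RN N → ℝ) : ℝ :=
  (∫ x in Ω, (u x) ^ 2) + (∫ x in Ωᶜ, |g x| * (u x) ^ 2) + (gagE N s (QSet Ω) u).toReal

/-- The measure `μ = κ dx` on `ℝ^N ∖ Ω`. -/
def muMeas {N : ℕ} (Ω : Set (RN N)) (κ : RN N → ℝ) : Measure (RN N) :=
  (volume.restrict Ωᶜ).withDensity fun x => ENNReal.ofReal (κ x)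

/-- Assumption (A) on the coefficient `κ`. -/
structure AssumpA {N : ℕ} (Ω : Set (RN N)) (κ : RN N → ℝ) : Prop where
  meas : Measurable κ
  nonneg : ∀ x, 0 ≤ κ x
  memL1 : IntegrableOn κ Ωᶜ
  memLinfty : ∃ Cb : ℝ, ∀ᵐ x ∂(volume.restrict Ωᶜ), κ x ≤ Cb
  cpt : IsCompact (tsupport κ)
  suppSubset : tsupport κ ⊆ Ωᶜ
  pos : ∀ᵐ x ∂(volume.restrict (tsupport κ)), 0 < κ x

/-- `F` represents an element of the dual space `(W^{s,2}_{Ω,κ})⋆`. -/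
structure MemDualWkap (N : ℕ) (s : ℝ) (Ω : Set (RN N)) (κ : RN N → ℝ)
    (F : (RN N → ℝ) → ℝ) : Prop where
  congr : ∀ u v, MemWg N s Ω κ u → MemWg N s Ω κ v → u =ᵐ[volume] v → F u = F v
  map_add : ∀ u v, MemWg N s Ω κ u → MemWg N s Ω κ v → F (u + v) = F u + F v
  map_smul : ∀ (c : ℝ) u, MemWg N s Ω κ u → F (c • u) = c * F u
  bdd : ∃ M : ℝ, ∀ u, MemWg N s Ω κ u → |F u| ≤ M * Real.sqrt (WgNormSq N s Ω κ u)

/-- Dual norm on `(W^{s,2}_{Ω,κ})⋆`. -/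
def dualNormWkap (N : ℕ) (s : ℝ) (Ω : Set (RN N)) (κ : RN N → ℝ)
    (F : (RN N → ℝ) → ℝ) : ℝ :=
  sInf {M : ℝ | 0 ≤ M ∧ ∀ u, MemWg N s Ω κ u → |F u| ≤ M * Real.sqrt (WgNormSq N s Ω κ u)}

/-- Weak solution of the Robin exterior value problem
`(−Δ)^s u = F in Ω`, `𝒩_s u + κ u = κ z in ℝ^N∖Ω`. -/
def IsWeakSolRobin (N : ℕ) (s : ℝ) (Ω : Set (RN N)) (κ : RN N → ℝ)
    (F : (RN N → ℝ) → ℝ) (z u : RN N → ℝ) : Prop :=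
  MemWg N s Ω κ u ∧
    ∀ v, MemWg N s Ω κ v →
      gagB N s (QSet Ω) u v + ∫ x in Ωᶜ, κ x * u x * v x =
        F v + ∫ x in Ωᶜ, κ x * z x * v x

/-- Weak solution of the regularized (Robin-penalized) problem with parameter `n`:
`(−Δ)^s u = 0 in Ω`, `𝒩_s u + nκ u = nκ z in ℝ^N∖Ω`. -/
def IsWeakSolPen (N : ℕ) (s : ℝ) (Ω : Set (RN N)) (κ : RN N → ℝ) (n : ℕ)
    (z u : RN N → ℝ) : Prop :=
  MemWg N s Ω κ u ∧ (∫⁻ x in Ωᶜ, ENNReal.ofReal ((u x) ^ 2)) < ⊤ ∧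
    ∀ v, MemWg N s Ω κ v → (∫⁻ x in Ωᶜ, ENNReal.ofReal ((v x) ^ 2)) < ⊤ →
      Cns N s / 2 * gagB N s (QSet Ω) u v + n * ∫ x in Ωᶜ, κ x * u x * v x =
        n * ∫ x in Ωᶜ, κ x * z x * v x

/-!
Put `ρ = dx⌊Ω + |g| dx⌊(ℝ^N∖Ω)` and `γ = |x - y|^{-N-2s} dx dy⌊Q`. Then
`‖u‖² = ‖u‖²_{L²(ρ)} + ‖u(x) - u(y)‖²_{L²(γ)}`, which is the quadratic form of
`∫ u v dρ + ∬ (u(x) - u(y)) (v(x) - v(y)) dγ`.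

For completeness, `ρ` does not see the part of `ℝ^N∖Ω` where `g = 0`, so a Cauchy sequence is not
obviously a.e. convergent there. Fix a ball `B ⊆ Ω`. As `|x - y|` is bounded below for `x ∈ B`,
`y ∉ Ω`, the weight `W(y) = ∫_B |x - y|^{-N-2s} dx` is positive on `ℝ^N∖Ω`, and
`u(y)² ≤ 2 (u(x) - u(y))² + 2 u(x)²` integrated over `B × (ℝ^N∖Ω)` bounds `∫_{ℝ^N∖Ω} W u²` by the
norm. So the sequence is Cauchy in `L²(ν)` for `ν = ρ + W dx⌊(ℝ^N∖Ω)`, which dominates Lebesgue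
measure: a subsequence converges `ν`-a.e., hence a.e. on `ℝ^N` and `γ`-a.e. as a function of pairs,
and Fatou's lemma in `L²(ρ)` and `L²(γ)` shows that the limit is in the space and is the norm
limit.
-/

section PairDiff

variable {α : Type*}

def pairDiff (u : α → ℝ) (p : α × α) : ℝ := u p.1 - u p.2

lemma pairDiff_sub (u v : α → ℝ) : pairDiff (u - v) = pairDiff u - pairDiff v := by
  ext p
  simp only [pairDiff, Pi.sub_apply]
  ring

lemma pairDiff_add (u v : α → ℝ) : pairDiff (u + v) = pairDiff u + pairDiff v := by
  ext p
  simp only [pairDiff, Pi.add_apply]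
  ring

lemma pairDiff_smul (c : ℝ) (u : α → ℝ) : pairDiff (c • u) = c • pairDiff u := by
  ext p
  simp only [pairDiff, Pi.smul_apply, smul_eq_mul]
  ring

lemma Measurable.pairDiff [MeasurableSpace α] {u : α → ℝ} (hu : Measurable u) :
    Measurable (pairDiff u) :=
  (hu.comp measurable_fst).sub (hu.comp measurable_snd)

end PairDiff

section LpTwo

variable {α : Type*} [MeasurableSpace α] {μ : Measure α}

lemma eLpNorm_two_sq (f : α → ℝ) :
    eLpNorm f 2 μ ^ 2 = ∫⁻ x, ENNReal.ofReal (f x ^ 2) ∂μ := by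
  have h := eLpNorm_nnreal_pow_eq_lintegral (μ := μ) (f := f) (p := 2) two_ne_zero
  simp only [NNReal.coe_ofNat, ENNReal.coe_ofNat, ENNReal.rpow_ofNat] at h
  rw [h]
  refine lintegral_congr fun x => ?_
  rw [Real.enorm_eq_ofReal_abs, ← ENNReal.ofReal_pow (abs_nonneg _), sq_abs]

lemma memLp_two_iff_lintegral_sq_lt_top {f : α → ℝ} (hf : AEStronglyMeasurable f μ) :
    MemLp f 2 μ ↔ ∫⁻ x, ENNReal.ofReal (f x ^ 2) ∂μ < ∞ := by
  simp [← eLpNorm_two_sq, ENNReal.pow_lt_top_iff, MemLp, hf]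

lemma integral_mul_self_eq_eLpNorm_sq {f : α → ℝ} (hf : AEStronglyMeasurable f μ) :
    ∫ x, f x * f x ∂μ = (eLpNorm f 2 μ ^ 2).toReal := by
  rw [eLpNorm_two_sq, ← integral_eq_lintegral_of_nonneg_ae
    (ae_of_all _ fun x => sq_nonneg (f x)) (hf.pow 2)]
  simp only [sq]

end LpTwo

section AbstractCompleteness

variable {α E : Type*} [MeasurableSpace α] [NormedAddCommGroup E] {p : ℝ≥0∞}

lemma exists_subseq_ae_tendsto_of_cauchy [CompleteSpace E] [Fact (1 ≤ p)] {μ : Measure α}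
    {f : ℕ → α → E} (hf : ∀ n, MemLp (f n) p μ)
    (hcau : Tendsto (fun q : ℕ × ℕ => eLpNorm (f q.1 - f q.2) p μ) atTop (𝓝 0)) :
    ∃ ns : ℕ → ℕ, StrictMono ns ∧ ∃ F : α → E, StronglyMeasurable F ∧
      ∀ᵐ x ∂μ, Tendsto (fun k => f (ns k) x) atTop (𝓝 (F x)) := by
  set F' : ℕ → Lp E p μ := fun n => (hf n).toLp
  have hF' : CauchySeq F' := by
    rw [cauchySeq_iff_tendsto_dist_atTop_0]
    have h := (ENNReal.tendsto_toReal ENNReal.zero_ne_top).comp hcau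
    rw [ENNReal.toReal_zero] at h
    simpa only [F', dist_edist, Lp.edist_toLp_toLp, Function.comp_def] using h
  obtain ⟨G, hG⟩ := cauchySeq_tendsto_of_complete hF'
  obtain ⟨ns, hns, hae⟩ := (tendstoInMeasure_of_tendsto_Lp hG).exists_seq_tendsto_ae
  have hcoe : ∀ᵐ x ∂μ, ∀ n, F' n x = f n x := ae_all_iff.2 fun n => (hf n).coeFn_toLp
  refine ⟨ns, hns, _, (Lp.aestronglyMeasurable G).stronglyMeasurable_mk, ?_⟩
  filter_upwards [hae, hcoe, (Lp.aestronglyMeasurable G).ae_eq_mk] with x hx hxc hxG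
  simpa only [hxc, hxG] using hx

lemma tendsto_eLpNorm_sub_of_cauchy_of_ae_tendsto {μ : Measure α} {f : ℕ → α → E} {F : α → E}
    {ns : ℕ → ℕ} (hns : Tendsto ns atTop atTop) (hf : ∀ n, AEStronglyMeasurable (f n) μ)
    (hlim : ∀ᵐ x ∂μ, Tendsto (fun k => f (ns k) x) atTop (𝓝 (F x)))
    (hcau : Tendsto (fun q : ℕ × ℕ => eLpNorm (f q.1 - f q.2) p μ) atTop (𝓝 0)) :
    Tendsto (fun n => eLpNorm (f n - F) p μ) atTop (𝓝 0) := by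
  rw [ENNReal.tendsto_nhds_zero] at hcau ⊢
  intro ε hε
  obtain ⟨⟨M, M'⟩, hM⟩ := eventually_atTop.1 (hcau ε hε)
  refine eventually_atTop.2 ⟨M, fun n hn => ?_⟩
  calc eLpNorm (f n - F) p μ ≤ atTop.liminf (fun k => eLpNorm (f n - f (ns k)) p μ) :=
        Lp.eLpNorm_lim_le_liminf_eLpNorm (fun k => (hf n).sub (hf (ns k))) _
          (hlim.mono fun x hx => tendsto_const_nhds.sub hx)
    _ ≤ ε := liminf_le_of_frequently_le' ((hns.eventually_ge_atTop M').mono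
          fun k hk => hM (n, ns k) ⟨hn, hk⟩).frequently

theorem exists_tendsto_eLpNorm_of_cauchy [Fact (1 ≤ p)] {ρ ν : Measure α} {γ : Measure (α × α)}
    [SFinite ν] (hρ : ρ ≪ ν) (hγ : γ ≪ ν.prod ν) {C : ℝ≥0∞} (hC : C ≠ ∞)
    (hν : ∀ u : α → ℝ, Measurable u →
      eLpNorm u p ν ≤ C * (eLpNorm u p ρ + eLpNorm (pairDiff u) p γ))
    {u : ℕ → α → ℝ} (hu : ∀ n, Measurable (u n)) (hρu : ∀ n, MemLp (u n) p ρ)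
    (hγu : ∀ n, MemLp (pairDiff (u n)) p γ)
    (hcρ : Tendsto (fun q : ℕ × ℕ => eLpNorm (u q.1 - u q.2) p ρ) atTop (𝓝 0))
    (hcγ : Tendsto (fun q : ℕ × ℕ => eLpNorm (pairDiff (u q.1 - u q.2)) p γ) atTop (𝓝 0)) :
    ∃ v : α → ℝ, Measurable v ∧ Tendsto (fun n => eLpNorm (u n - v) p ρ) atTop (𝓝 0) ∧
      Tendsto (fun n => eLpNorm (pairDiff (u n - v)) p γ) atTop (𝓝 0) := by
  have hνu (n : ℕ) : MemLp (u n) p ν :=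
    ⟨(hu n).aestronglyMeasurable, (hν _ (hu n)).trans_lt
      (ENNReal.mul_lt_top hC.lt_top (ENNReal.add_lt_top.2 ⟨(hρu n).2, (hγu n).2⟩))⟩
  have hcν : Tendsto (fun q : ℕ × ℕ => eLpNorm (u q.1 - u q.2) p ν) atTop (𝓝 0) := by
    have h := ENNReal.Tendsto.const_mul (hcρ.add hcγ) (Or.inr hC)
    rw [add_zero, mul_zero] at h
    exact tendsto_of_tendsto_of_tendsto_of_le_of_le tendsto_const_nhds h (fun _ => zero_le)
      fun q => hν _ ((hu _).sub (hu _))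
  obtain ⟨ns, hns, v, hvm, hae⟩ := exists_subseq_ae_tendsto_of_cauchy hνu hcν
  have hγae : ∀ᵐ q ∂γ, Tendsto (fun k => pairDiff (u (ns k)) q) atTop (𝓝 (pairDiff v q)) := by
    filter_upwards [hγ.ae_le (Measure.quasiMeasurePreserving_fst.ae hae),
      hγ.ae_le (Measure.quasiMeasurePreserving_snd.ae hae)] with q h₁ h₂ using h₁.sub h₂
  refine ⟨v, hvm.measurable, tendsto_eLpNorm_sub_of_cauchy_of_ae_tendsto hns.tendsto_atTop
    (fun n => (hu n).aestronglyMeasurable) (hρ.ae_le hae) hcρ, ?_⟩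
  simp only [pairDiff_sub] at hcγ ⊢
  exact tendsto_eLpNorm_sub_of_cauchy_of_ae_tendsto hns.tendsto_atTop
    (fun n => (hu n).pairDiff.aestronglyMeasurable) hγae hcγ

end AbstractCompleteness

section WgSpace

variable {N : ℕ} {s : ℝ} {Ω : Set (RN N)} {g u v : RN N → ℝ}

lemma Kden_nonneg (N : ℕ) (s : ℝ) (x y : RN N) : 0 ≤ Kden N s x y :=
  Real.rpow_nonneg (norm_nonneg _) _

lemma measurable_Kden (N : ℕ) (s : ℝ) : Measurable fun p : RN N × RN N => Kden N s p.1 p.2 := by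
  unfold Kden
  fun_prop

def wgMeasure (Ω : Set (RN N)) (g : RN N → ℝ) : Measure (RN N) :=
  volume.restrict Ω + (volume.restrict Ωᶜ).withDensity fun x => ENNReal.ofReal |g x|

def gagMeasure (N : ℕ) (s : ℝ) (Ω : Set (RN N)) : Measure (RN N × RN N) :=
  (volume.restrict (QSet Ω)).withDensity fun p => ENNReal.ofReal (Kden N s p.1 p.2)⁻¹

lemma lintegral_wgMeasure (hg : AEMeasurable g (volume.restrict Ωᶜ)) (hu : Measurable u) :
    ∫⁻ x, ENNReal.ofReal (u x ^ 2) ∂(wgMeasure Ω g) =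
      (∫⁻ x in Ω, ENNReal.ofReal (u x ^ 2)) + ∫⁻ x in Ωᶜ, ENNReal.ofReal (|g x| * u x ^ 2) := by
  rw [wgMeasure, lintegral_add_measure, lintegral_withDensity_eq_lintegral_mul₀
    (by fun_prop) (by fun_prop)]
  simp only [Pi.mul_apply, ← ENNReal.ofReal_mul (abs_nonneg _)]

lemma lintegral_gagMeasure (hu : Measurable u) :
    ∫⁻ q, ENNReal.ofReal (pairDiff u q ^ 2) ∂(gagMeasure N s Ω) = gagE N s (QSet Ω) u := by
  have hK : Measurable fun p : RN N × RN N => ENNReal.ofReal (Kden N s p.1 p.2)⁻¹ :=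
    (measurable_Kden N s).inv.ennreal_ofReal
  rw [gagMeasure, lintegral_withDensity_eq_lintegral_mul _ hK
    (hu.pairDiff.pow_const 2).ennreal_ofReal]
  refine lintegral_congr fun q => ?_
  rw [Pi.mul_apply, ← ENNReal.ofReal_mul (inv_nonneg.2 (Kden_nonneg N s _ _)),
    inv_mul_eq_div, pairDiff]

lemma memWg_iff (hg : AEMeasurable g (volume.restrict Ωᶜ)) :
    MemWg N s Ω g u ↔
      Measurable u ∧ MemLp u 2 (wgMeasure Ω g) ∧ MemLp (pairDiff u) 2 (gagMeasure N s Ω) := by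
  refine ⟨fun ⟨hu, h₁, h₂, h₃⟩ => ⟨hu, ?_, ?_⟩, fun ⟨hu, hρ, hγ⟩ => ⟨hu, ?_⟩⟩
  · rw [memLp_two_iff_lintegral_sq_lt_top hu.aestronglyMeasurable, lintegral_wgMeasure hg hu]
    exact ENNReal.add_lt_top.2 ⟨h₁, h₂⟩
  · rwa [memLp_two_iff_lintegral_sq_lt_top hu.pairDiff.aestronglyMeasurable,
      lintegral_gagMeasure hu]
  · rw [memLp_two_iff_lintegral_sq_lt_top hu.aestronglyMeasurable, lintegral_wgMeasure hg hu,
      ENNReal.add_lt_top] at hρ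
    rw [memLp_two_iff_lintegral_sq_lt_top hu.pairDiff.aestronglyMeasurable,
      lintegral_gagMeasure hu] at hγ
    exact ⟨hρ.1, hρ.2, hγ⟩

lemma MemWg.sub (hg : AEMeasurable g (volume.restrict Ωᶜ)) (hu : MemWg N s Ω g u)
    (hv : MemWg N s Ω g v) : MemWg N s Ω g (u - v) := by
  rw [memWg_iff hg] at hu hv ⊢
  exact ⟨hu.1.sub hv.1, hu.2.1.sub hv.2.1, pairDiff_sub u v ▸ hu.2.2.sub hv.2.2⟩

lemma wgNormSq_eq (hg : AEMeasurable g (volume.restrict Ωᶜ)) (hu : MemWg N s Ω g u) :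
    WgNormSq N s Ω g u = (eLpNorm u 2 (wgMeasure Ω g) ^ 2).toReal +
      (eLpNorm (pairDiff u) 2 (gagMeasure N s Ω) ^ 2).toReal := by
  obtain ⟨hum, h₁, h₂, -⟩ := hu
  rw [eLpNorm_two_sq, eLpNorm_two_sq, lintegral_wgMeasure hg hum, lintegral_gagMeasure hum,
    ENNReal.toReal_add h₁.ne h₂.ne, WgNormSq,
    integral_eq_lintegral_of_nonneg_ae (ae_of_all _ fun x => sq_nonneg (u x)) (by fun_prop),
    integral_eq_lintegral_of_nonneg_ae
      (ae_of_all _ fun x => mul_nonneg (abs_nonneg (g x)) (sq_nonneg (u x))) (by fun_prop)]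

lemma eLpNorm_le_sqrt_wgNormSq (hg : AEMeasurable g (volume.restrict Ωᶜ))
    (hu : MemWg N s Ω g u) :
    eLpNorm u 2 (wgMeasure Ω g) ≤ ENNReal.ofReal √(WgNormSq N s Ω g u) ∧
      eLpNorm (pairDiff u) 2 (gagMeasure N s Ω) ≤ ENNReal.ofReal √(WgNormSq N s Ω g u) := by
  obtain ⟨-, hρ, hγ⟩ := (memWg_iff hg).1 hu
  rw [wgNormSq_eq hg hu, ENNReal.toReal_pow, ENNReal.toReal_pow]
  constructor
  · exact (ENNReal.le_ofReal_iff_toReal_le hρ.2.ne (Real.sqrt_nonneg _)).2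
      (Real.le_sqrt_of_sq_le (le_add_of_nonneg_right (sq_nonneg _)))
  · exact (ENNReal.le_ofReal_iff_toReal_le hγ.2.ne (Real.sqrt_nonneg _)).2
      (Real.le_sqrt_of_sq_le (le_add_of_nonneg_left (sq_nonneg _)))

end WgSpace

section WgInner

variable {N : ℕ} {s : ℝ} {Ω : Set (RN N)} {g u v φ : RN N → ℝ}

def wgInner (N : ℕ) (s : ℝ) (Ω : Set (RN N)) (g u v : RN N → ℝ) : ℝ :=
  (∫ x, u x * v x ∂(wgMeasure Ω g)) + ∫ q, pairDiff u q * pairDiff v q ∂(gagMeasure N s Ω)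

lemma wgInner_self (hg : AEMeasurable g (volume.restrict Ωᶜ)) (hu : MemWg N s Ω g u) :
    wgInner N s Ω g u u = WgNormSq N s Ω g u := by
  rw [wgInner, wgNormSq_eq hg hu, integral_mul_self_eq_eLpNorm_sq hu.1.aestronglyMeasurable,
    integral_mul_self_eq_eLpNorm_sq hu.1.pairDiff.aestronglyMeasurable]

lemma wgInner_comm (u v : RN N → ℝ) : wgInner N s Ω g u v = wgInner N s Ω g v u := by
  simp only [wgInner, mul_comm]

lemma wgInner_add (hg : AEMeasurable g (volume.restrict Ωᶜ)) (hu : MemWg N s Ω g u)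
    (hv : MemWg N s Ω g v) (hφ : MemWg N s Ω g φ) :
    wgInner N s Ω g (u + v) φ = wgInner N s Ω g u φ + wgInner N s Ω g v φ := by
  obtain ⟨-, huρ, huγ⟩ := (memWg_iff hg).1 hu
  obtain ⟨-, hvρ, hvγ⟩ := (memWg_iff hg).1 hv
  obtain ⟨-, hφρ, hφγ⟩ := (memWg_iff hg).1 hφ
  simp only [wgInner, pairDiff_add, Pi.add_apply, add_mul]
  rw [integral_add (f := fun x => u x * φ x) (g := fun x => v x * φ x)
      (huρ.integrable_mul hφρ) (hvρ.integrable_mul hφρ),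
    integral_add (f := fun q => pairDiff u q * pairDiff φ q)
      (g := fun q => pairDiff v q * pairDiff φ q) (huγ.integrable_mul hφγ)
      (hvγ.integrable_mul hφγ)]
  ring

lemma wgInner_smul (c : ℝ) (u v : RN N → ℝ) :
    wgInner N s Ω g (c • u) v = c * wgInner N s Ω g u v := by
  simp only [wgInner, pairDiff_smul, Pi.smul_apply, smul_eq_mul, mul_assoc, integral_const_mul,
    mul_add]

end WgInner

section KernelMass

variable {N : ℕ} {s : ℝ} {Ω B : Set (RN N)} {u : RN N → ℝ}

def kernelMass (N : ℕ) (s : ℝ) (B : Set (RN N)) (y : RN N) : ℝ≥0∞ :=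
  ∫⁻ x in B, ENNReal.ofReal (Kden N s x y)⁻¹

lemma measurable_kernelMass (B : Set (RN N)) : Measurable (kernelMass N s B) :=
  ((measurable_Kden N s).inv.ennreal_ofReal.comp measurable_swap).lintegral_prod_right'

lemma kernelMass_ne_zero (hB : volume B ≠ 0) {y : RN N} (hy : y ∉ B) :
    kernelMass N s B y ≠ 0 := by
  have hpos : ∀ x ∈ B, ENNReal.ofReal (Kden N s x y)⁻¹ ≠ 0 := fun x hx =>
    (ENNReal.ofReal_pos.2 (inv_pos.2 (Real.rpow_pos_of_pos
      (norm_pos_iff.2 (sub_ne_zero.2 (ne_of_mem_of_not_mem hx hy))) _))).ne'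
  have hm : Measurable fun x => ENNReal.ofReal (Kden N s x y)⁻¹ :=
    ((measurable_Kden N s).comp (measurable_id.prodMk measurable_const)).inv.ennreal_ofReal
  rw [kernelMass, ← pos_iff_ne_zero, setLIntegral_pos_iff hm,
    inter_eq_right.2 fun x hx => Function.mem_support.2 (hpos x hx)]
  exact pos_iff_ne_zero.2 hB

lemma inv_Kden_le_of_le_norm (hs : 0 ≤ s) {r : ℝ} (hr : 0 < r) {x y : RN N} (hxy : r ≤ ‖x - y‖) :
    (Kden N s x y)⁻¹ ≤
      ((1 + r) / r) ^ ((N : ℝ) + 2 * s) * (1 + ‖y - x‖) ^ (-((N : ℝ) + 2 * s)) := by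
  have ht : 0 ≤ (N : ℝ) + 2 * s := by positivity
  have ha : 0 < ‖x - y‖ := hr.trans_le hxy
  have h₁ : 1 + ‖x - y‖ ≤ (1 + r) / r * ‖x - y‖ := by
    rw [div_mul_eq_mul_div, le_div_iff₀ hr]
    nlinarith
  have h₂ : (1 + ‖x - y‖) ^ ((N : ℝ) + 2 * s) ≤
      ((1 + r) / r) ^ ((N : ℝ) + 2 * s) * ‖x - y‖ ^ ((N : ℝ) + 2 * s) := by
    rw [← Real.mul_rpow (by positivity) ha.le]
    exact Real.rpow_le_rpow (by positivity) h₁ ht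
  rw [Kden, norm_sub_rev y x, Real.rpow_neg (by positivity), ← div_eq_mul_inv, inv_eq_one_div,
    div_le_div_iff₀ (by positivity) (by positivity), one_mul]
  exact h₂

lemma exists_lintegral_compl_inv_Kden_le (hs : 0 < s) (hΩ : IsOpen Ω) {x₀ : RN N}
    (hx₀ : x₀ ∈ Ω) : ∃ B ⊆ Ω, MeasurableSet B ∧ volume B ≠ 0 ∧
      ∃ C ≠ ∞, ∀ x ∈ B, ∫⁻ y in Ωᶜ, ENNReal.ofReal (Kden N s x y)⁻¹ ≤ C := by
  obtain ⟨ε, hε, hball⟩ := Metric.isOpen_iff.1 hΩ x₀ hx₀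
  have hr : 0 < ε / 2 := by positivity
  refine ⟨Metric.ball x₀ (ε / 2), (Metric.ball_subset_ball (by linarith)).trans hball,
    measurableSet_ball, (Metric.measure_ball_pos volume x₀ hr).ne', ?_⟩
  set c := ((1 + ε / 2) / (ε / 2)) ^ ((N : ℝ) + 2 * s)
  have hNt : (Module.finrank ℝ (RN N) : ℝ) < (N : ℝ) + 2 * s := by
    rw [finrank_euclideanSpace_fin]
    linarith
  refine ⟨∫⁻ z, ENNReal.ofReal (c * (1 + ‖z‖) ^ (-((N : ℝ) + 2 * s))),
    ((integrable_one_add_norm hNt).const_mul c).lintegral_lt_top.ne, fun x hx => ?_⟩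
  have hdist : ∀ y ∈ Ωᶜ, ε / 2 ≤ ‖x - y‖ := fun y hy => by
    have hyx₀ : ε ≤ dist y x₀ := not_lt.1 fun h => hy (hball h)
    have hxx₀ : dist x x₀ < ε / 2 := hx
    rw [← dist_eq_norm, dist_comm]
    linarith [dist_triangle y x x₀]
  calc ∫⁻ y in Ωᶜ, ENNReal.ofReal (Kden N s x y)⁻¹
      ≤ ∫⁻ y in Ωᶜ, ENNReal.ofReal (c * (1 + ‖y - x‖) ^ (-((N : ℝ) + 2 * s))) :=
        setLIntegral_mono' hΩ.measurableSet.compl fun y hy =>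
          ENNReal.ofReal_le_ofReal (inv_Kden_le_of_le_norm hs.le hr (hdist y hy))
    _ ≤ ∫⁻ y, ENNReal.ofReal (c * (1 + ‖y - x‖) ^ (-((N : ℝ) + 2 * s))) :=
        setLIntegral_le_lintegral _ _
    _ = ∫⁻ z, ENNReal.ofReal (c * (1 + ‖z‖) ^ (-((N : ℝ) + 2 * s))) :=
        lintegral_sub_right_eq_self (fun z => ENNReal.ofReal (c * (1 + ‖z‖) ^ _)) x

lemma ofReal_sq_le_two_mul_add (a b : ℝ) :
    ENNReal.ofReal (b ^ 2) ≤ 2 * ENNReal.ofReal ((a - b) ^ 2) + 2 * ENNReal.ofReal (a ^ 2) := by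
  rw [← ENNReal.ofReal_ofNat 2, ← ENNReal.ofReal_mul zero_le_two, ← ENNReal.ofReal_mul zero_le_two,
    ← ENNReal.ofReal_add (by positivity) (by positivity)]
  exact ENNReal.ofReal_le_ofReal (by nlinarith [sq_nonneg (2 * a - b)])

lemma lintegral_kernelMass_mul {A : Set (RN N)} {f : RN N → ℝ≥0∞} (hf : Measurable f) :
    ∫⁻ y in A, kernelMass N s B y * f y =
      ∫⁻ p in B ×ˢ A, ENNReal.ofReal (Kden N s p.1 p.2)⁻¹ * f p.2 := by
  have hk : Measurable fun p : RN N × RN N => ENNReal.ofReal (Kden N s p.1 p.2)⁻¹ :=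
    (measurable_Kden N s).inv.ennreal_ofReal
  have hF : Measurable fun p : RN N × RN N => ENNReal.ofReal (Kden N s p.1 p.2)⁻¹ * f p.2 :=
    hk.mul (hf.comp measurable_snd)
  rw [Measure.volume_eq_prod, ← Measure.prod_restrict, lintegral_prod_symm _ hF.aemeasurable]
  exact lintegral_congr fun y =>
    (lintegral_mul_const (f y) (hk.comp (measurable_id.prodMk measurable_const))).symm

lemma lintegral_inv_Kden_mul_sq_fst_le (hB : MeasurableSet B) (hBΩ : B ⊆ Ω) {C : ℝ≥0∞}
    (hC : ∀ x ∈ B, ∫⁻ y in Ωᶜ, ENNReal.ofReal (Kden N s x y)⁻¹ ≤ C) (hu : Measurable u) :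
    ∫⁻ p in B ×ˢ Ωᶜ, ENNReal.ofReal (Kden N s p.1 p.2)⁻¹ * ENNReal.ofReal (u p.1 ^ 2) ≤
      C * ∫⁻ x in Ω, ENNReal.ofReal (u x ^ 2) :=
  calc ∫⁻ p in B ×ˢ Ωᶜ, ENNReal.ofReal (Kden N s p.1 p.2)⁻¹ * ENNReal.ofReal (u p.1 ^ 2)
      = ∫⁻ x in B, (∫⁻ y in Ωᶜ, ENNReal.ofReal (Kden N s x y)⁻¹) * ENNReal.ofReal (u x ^ 2) := by
        have hF : Measurable fun p : RN N × RN N =>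
            ENNReal.ofReal (Kden N s p.1 p.2)⁻¹ * ENNReal.ofReal (u p.1 ^ 2) :=
          (measurable_Kden N s).inv.ennreal_ofReal.mul (by fun_prop)
        rw [Measure.volume_eq_prod, ← Measure.prod_restrict, lintegral_prod _ hF.aemeasurable]
        exact lintegral_congr fun x => lintegral_mul_const' (ENNReal.ofReal (u x ^ 2))
          (fun y => ENNReal.ofReal (Kden N s x y)⁻¹) ENNReal.ofReal_ne_top
    _ ≤ ∫⁻ x in B, C * ENNReal.ofReal (u x ^ 2) :=
        setLIntegral_mono' hB fun x hx => by gcongr; exact hC x hx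
    _ ≤ C * ∫⁻ x in Ω, ENNReal.ofReal (u x ^ 2) := by
        rw [lintegral_const_mul _ (by fun_prop)]
        gcongr

lemma lintegral_kernelMass_mul_sq_le (hB : MeasurableSet B) (hBΩ : B ⊆ Ω) {C : ℝ≥0∞}
    (hC : ∀ x ∈ B, ∫⁻ y in Ωᶜ, ENNReal.ofReal (Kden N s x y)⁻¹ ≤ C) (hu : Measurable u) :
    ∫⁻ y in Ωᶜ, kernelMass N s B y * ENNReal.ofReal (u y ^ 2) ≤
      2 * gagE N s (QSet Ω) u + 2 * C * ∫⁻ x in Ω, ENNReal.ofReal (u x ^ 2) := by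
  set k : RN N × RN N → ℝ≥0∞ := fun p => ENNReal.ofReal (Kden N s p.1 p.2)⁻¹
  have hk : Measurable k := (measurable_Kden N s).inv.ennreal_ofReal
  have hgag : ∀ p : RN N × RN N,
      ENNReal.ofReal ((u p.1 - u p.2) ^ 2 / Kden N s p.1 p.2) =
        k p * ENNReal.ofReal ((u p.1 - u p.2) ^ 2) :=
    fun p => by rw [← ENNReal.ofReal_mul (inv_nonneg.2 (Kden_nonneg N s _ _)), inv_mul_eq_div]
  have hm : Measurable fun p : RN N × RN N =>
      ENNReal.ofReal ((u p.1 - u p.2) ^ 2 / Kden N s p.1 p.2) :=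
    ((hu.pairDiff.pow_const 2).div (measurable_Kden N s)).ennreal_ofReal
  calc ∫⁻ y in Ωᶜ, kernelMass N s B y * ENNReal.ofReal (u y ^ 2)
      = ∫⁻ p in B ×ˢ Ωᶜ, k p * ENNReal.ofReal (u p.2 ^ 2) :=
        lintegral_kernelMass_mul (by fun_prop)
    _ ≤ ∫⁻ p in B ×ˢ Ωᶜ, (2 * ENNReal.ofReal ((u p.1 - u p.2) ^ 2 / Kden N s p.1 p.2) +
          2 * (k p * ENNReal.ofReal (u p.1 ^ 2))) := lintegral_mono fun p => by
        rw [hgag, mul_left_comm, mul_left_comm 2 (k p), ← mul_add]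
        gcongr
        exact ofReal_sq_le_two_mul_add _ _
    _ = 2 * (∫⁻ p in B ×ˢ Ωᶜ, ENNReal.ofReal ((u p.1 - u p.2) ^ 2 / Kden N s p.1 p.2)) +
          2 * ∫⁻ p in B ×ˢ Ωᶜ, k p * ENNReal.ofReal (u p.1 ^ 2) := by
        rw [lintegral_add_left (hm.const_mul 2), lintegral_const_mul _ hm,
          lintegral_const_mul _ (by fun_prop)]
    _ ≤ 2 * gagE N s (QSet Ω) u + 2 * C * ∫⁻ x in Ω, ENNReal.ofReal (u x ^ 2) := by
        rw [mul_assoc 2 C]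
        gcongr
        · exact lintegral_mono_set fun p hp hpQ => hpQ.1 (hBΩ hp.1)
        · exact lintegral_inv_Kden_mul_sq_fst_le hB hBΩ hC hu

end KernelMass

section Domination

variable {N : ℕ} {s : ℝ} {Ω B : Set (RN N)} {g u : RN N → ℝ}

def wgDomMeasure (N : ℕ) (s : ℝ) (Ω : Set (RN N)) (g : RN N → ℝ) (B : Set (RN N)) :
    Measure (RN N) :=
  wgMeasure Ω g + (volume.restrict Ωᶜ).withDensity (kernelMass N s B)

instance : SFinite (wgDomMeasure N s Ω g B) := by
  unfold wgDomMeasure wgMeasure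
  infer_instance

lemma eLpNorm_wgDomMeasure_le (hg : AEMeasurable g (volume.restrict Ωᶜ)) (hB : MeasurableSet B)
    (hBΩ : B ⊆ Ω) {C : ℝ≥0∞} (hC : ∀ x ∈ B, ∫⁻ y in Ωᶜ, ENNReal.ofReal (Kden N s x y)⁻¹ ≤ C)
    (hu : Measurable u) :
    eLpNorm u 2 (wgDomMeasure N s Ω g B) ≤
      (3 + 2 * C) * (eLpNorm u 2 (wgMeasure Ω g) + eLpNorm (pairDiff u) 2 (gagMeasure N s Ω)) := by
  set a := eLpNorm u 2 (wgMeasure Ω g)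
  set b := eLpNorm (pairDiff u) 2 (gagMeasure N s Ω)
  have hΩa : ∫⁻ x in Ω, ENNReal.ofReal (u x ^ 2) ≤ a ^ 2 := by
    rw [eLpNorm_two_sq, lintegral_wgMeasure hg hu]
    exact le_self_add
  have hb : gagE N s (QSet Ω) u = b ^ 2 := by rw [eLpNorm_two_sq, lintegral_gagMeasure hu]
  have hD : 1 ≤ 3 + 2 * C := le_add_right (by norm_num)
  rw [← ENNReal.pow_le_pow_left_iff two_ne_zero]
  calc eLpNorm u 2 (wgDomMeasure N s Ω g B) ^ 2
      = a ^ 2 + ∫⁻ y in Ωᶜ, kernelMass N s B y * ENNReal.ofReal (u y ^ 2) := by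
        rw [eLpNorm_two_sq, wgDomMeasure, lintegral_add_measure, ← eLpNorm_two_sq,
          lintegral_withDensity_eq_lintegral_mul _ (measurable_kernelMass B) (by fun_prop)]
        rfl
    _ ≤ a ^ 2 + (2 * b ^ 2 + 2 * C * a ^ 2) := by
        gcongr
        exact (lintegral_kernelMass_mul_sq_le hB hBΩ hC hu).trans (by rw [hb]; gcongr)
    _ = (1 + 2 * C) * a ^ 2 + 2 * b ^ 2 := by ring
    _ ≤ (3 + 2 * C) * a ^ 2 + (3 + 2 * C) * b ^ 2 := by
        gcongr
        · norm_num
        · exact le_add_right (by norm_num)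
    _ = (3 + 2 * C) * (a ^ 2 + b ^ 2) := by ring
    _ ≤ (3 + 2 * C) ^ 2 * (a + b) ^ 2 := by
        gcongr
        · exact le_self_pow₀ hD two_ne_zero
        · exact pow_add_pow_le zero_le zero_le two_ne_zero
    _ = ((3 + 2 * C) * (a + b)) ^ 2 := by ring

lemma volume_absolutelyContinuous_wgDomMeasure (hΩ : MeasurableSet Ω) (hBΩ : B ⊆ Ω)
    (hB : volume B ≠ 0) : (volume : Measure (RN N)) ≪ wgDomMeasure N s Ω g B := by
  rw [← Measure.restrict_add_restrict_compl (μ := volume) hΩ]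
  refine (Measure.AbsolutelyContinuous.rfl.add_right _).add
    (withDensity_absolutelyContinuous' (measurable_kernelMass B).aemeasurable ?_)
  exact (ae_restrict_mem hΩ.compl).mono fun y hy => kernelMass_ne_zero hB fun hyB => hy (hBΩ hyB)

lemma gagMeasure_absolutelyContinuous {ν : Measure (RN N)} [SFinite ν]
    (hν : (volume : Measure (RN N)) ≪ ν) : gagMeasure N s Ω ≪ ν.prod ν :=
  (withDensity_absolutelyContinuous _ _).trans <| Measure.absolutelyContinuous_restrict.trans <| by
    rw [Measure.volume_eq_prod]
    exact hν.prod hν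

end Domination

section WgCompleteness

variable {N : ℕ} {s : ℝ} {Ω : Set (RN N)} {g : RN N → ℝ}

lemma exists_wgDomMeasure_absolutelyContinuous (hs : 0 < s) (hΩ : IsOpen Ω) :
    ∃ B ⊆ Ω, MeasurableSet B ∧
      (∃ C ≠ ∞, ∀ x ∈ B, ∫⁻ y in Ωᶜ, ENNReal.ofReal (Kden N s x y)⁻¹ ≤ C) ∧
      gagMeasure N s Ω ≪ (wgDomMeasure N s Ω g B).prod (wgDomMeasure N s Ω g B) := by
  rcases Ω.eq_empty_or_nonempty with rfl | ⟨x₀, hx₀⟩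
  · refine ⟨∅, subset_rfl, MeasurableSet.empty, ⟨0, ENNReal.zero_ne_top, by simp⟩, ?_⟩
    have hγ : gagMeasure N s (∅ : Set (RN N)) = 0 := by simp [gagMeasure, QSet]
    rw [hγ]
    exact Measure.AbsolutelyContinuous.zero _
  · obtain ⟨B, hBΩ, hB, hBvol, hC⟩ := exists_lintegral_compl_inv_Kden_le hs hΩ hx₀
    exact ⟨B, hBΩ, hB, hC, gagMeasure_absolutelyContinuous
      (volume_absolutelyContinuous_wgDomMeasure hΩ.measurableSet hBΩ hBvol)⟩

lemma tendsto_sqrt_wgNormSq_iff (hg : AEMeasurable g (volume.restrict Ωᶜ)) {ι : Type*}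
    {l : Filter ι} {d : ι → RN N → ℝ} (hd : ∀ i, MemWg N s Ω g (d i)) :
    Tendsto (fun i => √(WgNormSq N s Ω g (d i))) l (𝓝 0) ↔
      Tendsto (fun i => eLpNorm (d i) 2 (wgMeasure Ω g)) l (𝓝 0) ∧
        Tendsto (fun i => eLpNorm (pairDiff (d i)) 2 (gagMeasure N s Ω)) l (𝓝 0) := by
  refine ⟨fun h => ?_, fun ⟨hρ, hγ⟩ => ?_⟩
  · have h' := ENNReal.tendsto_ofReal h
    rw [ENNReal.ofReal_zero] at h'
    exact ⟨tendsto_of_tendsto_of_tendsto_of_le_of_le tendsto_const_nhds h' (fun _ => zero_le)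
        fun i => (eLpNorm_le_sqrt_wgNormSq hg (hd i)).1,
      tendsto_of_tendsto_of_tendsto_of_le_of_le tendsto_const_nhds h' (fun _ => zero_le)
        fun i => (eLpNorm_le_sqrt_wgNormSq hg (hd i)).2⟩
  · have hsq {f : ι → ℝ≥0∞} (hf : Tendsto f l (𝓝 0)) :
        Tendsto (fun i => (f i ^ 2).toReal) l (𝓝 0) := by
      have h2 := ENNReal.Tendsto.pow hf (n := 2)
      rw [zero_pow two_ne_zero] at h2
      have h := (ENNReal.tendsto_toReal ENNReal.zero_ne_top).comp h2
      rwa [ENNReal.toReal_zero] at h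
    have h := ((hsq hρ).add (hsq hγ)).sqrt
    rw [add_zero, Real.sqrt_zero] at h
    exact h.congr fun i => by rw [wgNormSq_eq hg (hd i)]

lemma MemWg.of_tendsto (hg : AEMeasurable g (volume.restrict Ωᶜ)) {u : ℕ → RN N → ℝ}
    (hu : ∀ n, MemWg N s Ω g (u n)) {v : RN N → ℝ} (hv : Measurable v)
    (hρ : Tendsto (fun n => eLpNorm (u n - v) 2 (wgMeasure Ω g)) atTop (𝓝 0))
    (hγ : Tendsto (fun n => eLpNorm (pairDiff (u n - v)) 2 (gagMeasure N s Ω)) atTop (𝓝 0)) :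
    MemWg N s Ω g v := by
  obtain ⟨n, hnρ, hnγ⟩ := ((hρ.eventually (gt_mem_nhds zero_lt_one)).and
    (hγ.eventually (gt_mem_nhds zero_lt_one))).exists
  have hd : Measurable (u n - v) := (hu n).1.sub hv
  have hdW : MemWg N s Ω g (u n - v) := (memWg_iff hg).2
    ⟨hd, ⟨hd.aestronglyMeasurable, hnρ.trans ENNReal.one_lt_top⟩,
      ⟨hd.pairDiff.aestronglyMeasurable, hnγ.trans ENNReal.one_lt_top⟩⟩
  simpa using (hu n).sub hg hdW

theorem MemWg.exists_tendsto_of_cauchy (hs : 0 < s) (hΩ : IsOpen Ω)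
    (hg : AEMeasurable g (volume.restrict Ωᶜ)) {u : ℕ → RN N → ℝ}
    (hu : ∀ n, MemWg N s Ω g (u n))
    (hcau : Tendsto (fun q : ℕ × ℕ => √(WgNormSq N s Ω g (u q.1 - u q.2))) atTop (𝓝 0)) :
    ∃ v, MemWg N s Ω g v ∧ Tendsto (fun n => √(WgNormSq N s Ω g (u n - v))) atTop (𝓝 0) := by
  obtain ⟨B, hBΩ, hB, ⟨C, hC, hCB⟩, hγ⟩ :=
    exists_wgDomMeasure_absolutelyContinuous (g := g) hs hΩ
  have hu' (n : ℕ) := (memWg_iff hg).1 (hu n)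
  obtain ⟨hcρ, hcγ⟩ := (tendsto_sqrt_wgNormSq_iff (l := atTop)
    (d := fun q : ℕ × ℕ => u q.1 - u q.2) hg fun q => (hu q.1).sub hg (hu q.2)).1 hcau
  obtain ⟨v, hv, hvρ, hvγ⟩ := exists_tendsto_eLpNorm_of_cauchy (ν := wgDomMeasure N s Ω g B)
    (Measure.AbsolutelyContinuous.rfl.add_right _) hγ
    (ENNReal.add_ne_top.2 ⟨by norm_num, ENNReal.mul_ne_top (by norm_num) hC⟩)
    (fun w hw => eLpNorm_wgDomMeasure_le hg hB hBΩ hCB hw) (fun n => (hu' n).1)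
    (fun n => (hu' n).2.1) (fun n => (hu' n).2.2) hcρ hcγ
  have hvW : MemWg N s Ω g v := MemWg.of_tendsto hg hu hv hvρ hvγ
  exact ⟨v, hvW, (tendsto_sqrt_wgNormSq_iff hg fun n => (hu n).sub hg hvW).2 ⟨hvρ, hvγ⟩⟩

end WgCompleteness

theorem statement7_general (N : ℕ) (s : ℝ) (hs0 : 0 < s)
    (Ω : Set (RN N)) (hΩo : IsOpen Ω)
    (g : RN N → ℝ) (hg : IntegrableOn g Ωᶜ) :
    (∃ inn : (RN N → ℝ) → (RN N → ℝ) → ℝ,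
        (∀ u, MemWg N s Ω g u → inn u u = WgNormSq N s Ω g u) ∧
        (∀ u v, MemWg N s Ω g u → MemWg N s Ω g v → inn u v = inn v u) ∧
        (∀ u v φ, MemWg N s Ω g u → MemWg N s Ω g v → MemWg N s Ω g φ →
          inn (u + v) φ = inn u φ + inn v φ) ∧
        (∀ (c : ℝ) (u v : RN N → ℝ), MemWg N s Ω g u → MemWg N s Ω g v →
          inn (c • u) v = c * inn u v)) ∧
      ∀ useq : ℕ → RN N → ℝ, (∀ n, MemWg N s Ω g (useq n)) →
        (∀ ε : ℝ, 0 < ε → ∃ M : ℕ, ∀ m, M ≤ m → ∀ n, M ≤ n →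
          Real.sqrt (WgNormSq N s Ω g (useq m - useq n)) < ε) →
        ∃ u : RN N → ℝ, MemWg N s Ω g u ∧
          Tendsto (fun n => Real.sqrt (WgNormSq N s Ω g (useq n - u))) atTop (𝓝 0) := by
  have hgm : AEMeasurable g (volume.restrict Ωᶜ) := hg.aemeasurable
  refine ⟨⟨wgInner N s Ω g, fun u hu => wgInner_self hgm hu, fun u v _ _ => wgInner_comm u v,
    fun u v φ hu hv hφ => wgInner_add hgm hu hv hφ, fun c u v _ _ => wgInner_smul c u v⟩,
    fun useq hu hcau => MemWg.exists_tendsto_of_cauchy hs0 hΩo hgm hu ?_⟩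
  rw [Metric.tendsto_atTop]
  intro ε hε
  obtain ⟨M, hM⟩ := hcau ε hε
  refine ⟨(M, M), fun q hq => ?_⟩
  rw [Real.dist_eq, sub_zero, abs_of_nonneg (Real.sqrt_nonneg _)]
  exact hM q.1 hq.1 q.2 hq.2

/-- For `g ∈ L¹(ℝ^N∖Ω)`, the space `W^{s,2}_{Ω,g}` is a Hilbert space:
its norm is induced by an inner product, and every Cauchy sequence (with respect to the
norm) converges in norm to an element of the space (functions equal a.e. being identified). -/
theorem statement7 (N : ℕ) (hN : 1 ≤ N) (s : ℝ) (hs0 : 0 < s) (hs1 : s < 1)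
    (Ω : Set (RN N)) (hΩo : IsOpen Ω) (hΩb : Bornology.IsBounded Ω)
    (g : RN N → ℝ) (hg : IntegrableOn g Ωᶜ) :
    (∃ inn : (RN N → ℝ) → (RN N → ℝ) → ℝ,
        (∀ u, MemWg N s Ω g u → inn u u = WgNormSq N s Ω g u) ∧
        (∀ u v, MemWg N s Ω g u → MemWg N s Ω g v → inn u v = inn v u) ∧
        (∀ u v φ, MemWg N s Ω g u → MemWg N s Ω g v → MemWg N s Ω g φ →
          inn (u + v) φ = inn u φ + inn v φ) ∧
        (∀ (c : ℝ) (u v : RN N → ℝ), MemWg N s Ω g u → MemWg N s Ω g v →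
          inn (c • u) v = c * inn u v)) ∧
      ∀ useq : ℕ → RN N → ℝ, (∀ n, MemWg N s Ω g (useq n)) →
        (∀ ε : ℝ, 0 < ε → ∃ M : ℕ, ∀ m, M ≤ m → ∀ n, M ≤ n →
          Real.sqrt (WgNormSq N s Ω g (useq m - useq n)) < ε) →
        ∃ u : RN N → ℝ, MemWg N s Ω g u ∧
          Tendsto (fun n => Real.sqrt (WgNormSq N s Ω g (useq n - u))) atTop (𝓝 0) :=
  statement7_general N s hs0 Ω hΩo g hg
end
end

section
/- Let Ω ⊂ ℝ^N be a bounded open set with Lipschitz continuous boundary and let κ satisfy Assumption (A). Then there exist constants c > 0 and C > 0 such that for every measurable u : ℝ^N → ℝ with ‖u‖_{W^{s,2}_{Ω,κ}} < ∞ and u|_{ℝ^N∖Ω} ∈ L²(ℝ^N∖Ω), one has c (‖u‖²_{W^{s,2}_{Ω,κ}} + ‖u‖²_{L²(ℝ^N∖Ω)}) ≤ ∬_Q |u(x)−u(y)|²/|x−y|^{N+2s} dx dy + ∫_{ℝ^N∖Ω} u² dx ≤ C (‖u‖²_{W^{s,2}_{Ω,κ}} + ‖u‖²_{L²(ℝ^N∖Ω)});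 that is, ‖u‖_W := (∬_Q |u(x)−u(y)|²/|x−y|^{N+2s} dx dy + ∫_{ℝ^N∖Ω} u² dx)^{1/2} defines an equivalent norm on W^{s,2}_{Ω,κ} ∩ L²(ℝ^N∖Ω). -/
open MeasureTheory Set Filter Topology
open scoped ENNReal

noncomputable section

/-!
Choose a unit ball `B` disjoint from the bounded set `Ω`. For `x ∈ Ω` and `y ∈ B` the kernel
`|x - y|^{N+2s}` is bounded by `diam (Ω ∪ B)^{N+2s}`, so integrating
`u(x)² ≤ 2 (u(x) - u(y))² + 2 u(y)²` over `Ω × B ⊆ Q` bounds `‖u‖²_{L²(Ω)}` by a multiple of the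
Gagliardo seminorm over `Q` plus `‖u‖²_{L²(ℝ^N∖Ω)}`. Since `κ` is essentially bounded, the
`κ`-weighted term is at most `‖κ‖_∞ ‖u‖²_{L²(ℝ^N∖Ω)}`. The reverse inequality holds with `C = 1`.
-/

section ProductBound

variable {α β : Type*} [MeasurableSpace α] [MeasurableSpace β] {μ : Measure α} {ν : Measure β}
  [SFinite μ] [SFinite ν]

theorem measure_mul_setLIntegral_le_of_le_add {A : Set α} {B : Set β} {g : α → ℝ≥0∞}
    {f : α × β → ℝ≥0∞} {h : β → ℝ≥0∞} (hf : Measurable f) (hh : Measurable h)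
    (hle : ∀ x ∈ A, ∀ y ∈ B, g x ≤ f (x, y) + h y) :
    ν B * ∫⁻ x in A, g x ∂μ ≤ ∫⁻ p in A ×ˢ B, f p ∂μ.prod ν + μ A * ∫⁻ y in B, h y ∂ν := by
  have hF : Measurable fun x => ∫⁻ y in B, f (x, y) ∂ν := hf.lintegral_prod_right'
  calc ν B * ∫⁻ x in A, g x ∂μ
      ≤ ∫⁻ x in A, ∫⁻ _ in B, g x ∂ν ∂μ := by
        simp_rw [setLIntegral_const, mul_comm _ (ν B)]
        exact lintegral_const_mul_le _ _
    _ ≤ ∫⁻ x in A, (∫⁻ y in B, f (x, y) ∂ν + ∫⁻ y in B, h y ∂ν) ∂μ := by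
        refine setLIntegral_mono (hF.add_const _) fun x hx => ?_
        rw [← lintegral_add_right _ hh]
        exact setLIntegral_mono ((hf.comp measurable_prodMk_left).add hh) (hle x hx)
    _ = ∫⁻ p in A ×ˢ B, f p ∂μ.prod ν + μ A * ∫⁻ y in B, h y ∂ν := by
        rw [lintegral_add_right _ measurable_const, setLIntegral_const, mul_comm,
          ← Measure.prod_restrict, lintegral_prod _ hf.aemeasurable]

end ProductBound

theorem exists_ball_disjoint_of_isBounded {E : Type*} [NormedAddCommGroup E] [NormedSpace ℝ E]
    [Nontrivial E] {Ω : Set E} (hΩ : Bornology.IsBounded Ω) {r : ℝ} (hr : 0 ≤ r) :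
    ∃ p : E, Disjoint Ω (Metric.ball p r) := by
  obtain ⟨R, hR⟩ := hΩ.subset_closedBall 0
  obtain ⟨p, hp⟩ := exists_norm_eq E (add_nonneg (le_max_right R 0) hr)
  refine ⟨p, Set.disjoint_left.2 fun y hyΩ hyB => ?_⟩
  have hy : ‖y‖ ≤ R := by simpa using hR hyΩ
  have hyp : ‖p - y‖ < r := by simpa [dist_eq_norm'] using hyB
  have := norm_le_norm_add_norm_sub' p y
  linarith [le_max_left R 0]

theorem sq_le_two_mul_div_add {a b K D : ℝ} (hK : 0 < K) (hKD : K ≤ D) :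
    a ^ 2 ≤ 2 * D * ((a - b) ^ 2 / K) + 2 * b ^ 2 := by
  have hdiff : (a - b) ^ 2 ≤ D * ((a - b) ^ 2 / K) := by
    rw [mul_div_assoc', le_div_iff₀ hK, mul_comm D]
    exact mul_le_mul_of_nonneg_left hKD (sq_nonneg _)
  nlinarith [sq_nonneg (a - 2 * b)]

theorem integral_abs_mul_sq_le {α : Type*} [MeasurableSpace α] {μ : Measure α} {κ u : α → ℝ}
    {b : ℝ} (hb : ∀ᵐ x ∂μ, |κ x| ≤ b) (hu : Integrable (fun x => u x ^ 2) μ) :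
    ∫ x, |κ x| * u x ^ 2 ∂μ ≤ b * ∫ x, u x ^ 2 ∂μ := by
  rw [← integral_const_mul]
  refine integral_mono_of_nonneg (ae_of_all _ fun x => by positivity) (hu.const_mul b) ?_
  filter_upwards [hb] with x hx
  exact mul_le_mul_of_nonneg_right hx (sq_nonneg _)

theorem measurable_gagliardo_integrand {N : ℕ} {s : ℝ} {u : RN N → ℝ} (hu : Measurable u) :
    Measurable fun p : RN N × RN N => ENNReal.ofReal ((u p.1 - u p.2) ^ 2 / Kden N s p.1 p.2) :=
  (((hu.comp measurable_fst).sub (hu.comp measurable_snd)).pow_const 2).div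
    ((measurable_fst.sub measurable_snd).norm.pow_const _) |>.ennreal_ofReal

theorem ofReal_sq_le_of_norm_sub_le {N : ℕ} {s : ℝ} (hs : 0 ≤ s) (u : RN N → ℝ) {x y : RN N}
    {D : ℝ} (hxy : 0 < ‖x - y‖) (hD : ‖x - y‖ ≤ D) :
    ENNReal.ofReal (u x ^ 2) ≤ ENNReal.ofReal (2 * D ^ ((N : ℝ) + 2 * s)) *
        ENNReal.ofReal ((u x - u y) ^ 2 / Kden N s x y) + 2 * ENNReal.ofReal (u y ^ 2) := by
  have hK : Kden N s x y ≤ D ^ ((N : ℝ) + 2 * s) :=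
    Real.rpow_le_rpow hxy.le hD (by positivity)
  have hD0 : 0 ≤ D ^ ((N : ℝ) + 2 * s) := Real.rpow_nonneg (hxy.le.trans hD) _
  have hreal := sq_le_two_mul_div_add (a := u x) (b := u y) (K := Kden N s x y)
    (Real.rpow_pos_of_pos hxy _) hK
  have hq : 0 ≤ (u x - u y) ^ 2 / Kden N s x y :=
    div_nonneg (sq_nonneg _) (Real.rpow_nonneg (norm_nonneg _) _)
  rw [← ENNReal.ofReal_mul (by positivity), ← ENNReal.ofReal_ofNat 2,
    ← ENNReal.ofReal_mul zero_le_two,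
    ← ENNReal.ofReal_add (mul_nonneg (by positivity) hq) (by positivity)]
  exact ENNReal.ofReal_le_ofReal (by simpa only [mul_assoc] using hreal)

theorem exists_lintegral_sq_le_gagE_add {N : ℕ} (hN : 1 ≤ N) {s : ℝ} (hs : 0 ≤ s)
    {Ω : Set (RN N)} (hΩ : Bornology.IsBounded Ω) :
    ∃ C : ℝ≥0∞, C ≠ ⊤ ∧ ∀ u : RN N → ℝ, Measurable u →
      ∫⁻ x in Ω, ENNReal.ofReal (u x ^ 2) ≤
        C * (gagE N s (QSet Ω) u + ∫⁻ x in Ωᶜ, ENNReal.ofReal (u x ^ 2)) := by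
  have : Nonempty (Fin N) := ⟨⟨0, hN⟩⟩
  obtain ⟨p, hp⟩ := exists_ball_disjoint_of_isBounded hΩ zero_le_one
  set B := Metric.ball p 1
  set D := Metric.diam (Ω ∪ B)
  have hdist : ∀ x ∈ Ω, ∀ y ∈ B, 0 < ‖x - y‖ ∧ ‖x - y‖ ≤ D := fun x hx y hy =>
    ⟨norm_sub_pos_iff.2 fun h => hp.ne_of_mem hx hy h,
      by simpa [dist_eq_norm] using
        Metric.dist_le_diam_of_mem (hΩ.union Metric.isBounded_ball) (Or.inl hx) (Or.inr hy)⟩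
  set c := ENNReal.ofReal (2 * D ^ ((N : ℝ) + 2 * s))
  have hB0 : volume B ≠ 0 := (Metric.measure_ball_pos volume p one_pos).ne'
  refine ⟨(c + 2 * volume Ω) / volume B,
    ENNReal.div_ne_top (by finiteness [hΩ.measure_lt_top (μ := volume)]) hB0, fun u hu => ?_⟩
  have hu2 : Measurable fun x => ENNReal.ofReal (u x ^ 2) := (hu.pow_const 2).ennreal_ofReal
  have key := measure_mul_setLIntegral_le_of_le_add (μ := volume) (ν := volume) (A := Ω) (B := B)
    ((measurable_gagliardo_integrand (s := s) hu).const_mul c) (hu2.const_mul 2)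
    fun x hx y hy => ofReal_sq_le_of_norm_sub_le hs u (hdist x hx y hy).1 (hdist x hx y hy).2
  rw [← ENNReal.mul_div_right_comm,
    ENNReal.le_div_iff_mul_le (Or.inl hB0) (Or.inl (measure_ball_lt_top (μ := volume)).ne)]
  have hΩB : Ω ×ˢ B ⊆ QSet Ω := fun q hq hq' => hq'.1 hq.1
  calc (∫⁻ x in Ω, ENNReal.ofReal (u x ^ 2)) * volume B
      = volume B * ∫⁻ x in Ω, ENNReal.ofReal (u x ^ 2) := mul_comm _ _
    _ ≤ c * gagE N s (Ω ×ˢ B) u + volume Ω * (2 * ∫⁻ y in B, ENNReal.ofReal (u y ^ 2)) := by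
      rwa [lintegral_const_mul _ (measurable_gagliardo_integrand hu),
        lintegral_const_mul _ hu2, ← Measure.volume_eq_prod] at key
    _ ≤ c * gagE N s (QSet Ω) u + volume Ω * (2 * ∫⁻ x in Ωᶜ, ENNReal.ofReal (u x ^ 2)) := by
      gcongr
      · exact lintegral_mono_set hΩB
      · exact Set.subset_compl_iff_disjoint_left.2 hp
    _ ≤ (c + 2 * volume Ω) * (gagE N s (QSet Ω) u + ∫⁻ x in Ωᶜ, ENNReal.ofReal (u x ^ 2)) := by
      rw [add_mul, ← mul_assoc, mul_comm (volume Ω) 2]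
      gcongr
      · exact le_self_add
      · exact le_add_self

theorem exists_integral_sq_le_gagE_add {N : ℕ} (hN : 1 ≤ N) {s : ℝ} (hs : 0 ≤ s)
    {Ω : Set (RN N)} (hΩ : Bornology.IsBounded Ω) :
    ∃ C : ℝ, 0 ≤ C ∧ ∀ u : RN N → ℝ, Measurable u → gagE N s (QSet Ω) u < ⊤ →
      ∫⁻ x in Ωᶜ, ENNReal.ofReal (u x ^ 2) < ⊤ →
      ∫ x in Ω, u x ^ 2 ≤ C * ((gagE N s (QSet Ω) u).toReal + ∫ x in Ωᶜ, u x ^ 2) := by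
  obtain ⟨C, hCtop, hC⟩ := exists_lintegral_sq_le_gagE_add hN hs hΩ
  refine ⟨C.toReal, ENNReal.toReal_nonneg, fun u hu hG hE => ?_⟩
  have hsq (t : Set (RN N)) :
      ∫ x in t, u x ^ 2 = (∫⁻ x in t, ENNReal.ofReal (u x ^ 2)).toReal :=
    integral_eq_lintegral_of_nonneg_ae (ae_of_all _ fun _ => sq_nonneg _)
      (hu.pow_const 2).aestronglyMeasurable
  rw [hsq, hsq, ← ENNReal.toReal_add hG.ne hE.ne, ← ENNReal.toReal_mul]
  exact ENNReal.toReal_mono (by finiteness) (hC u hu)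

theorem statement15_general (N : ℕ) (hN : 1 ≤ N) (s : ℝ) (hs0 : 0 < s)
    (Ω : Set (RN N)) (hΩb : Bornology.IsBounded Ω)
    (κ : RN N → ℝ) (hκ : AssumpA Ω κ) :
    ∃ c C : ℝ, 0 < c ∧ 0 < C ∧
      ∀ u : RN N → ℝ, MemWg N s Ω κ u →
        (∫⁻ x in Ωᶜ, ENNReal.ofReal ((u x) ^ 2)) < ⊤ →
        c * (WgNormSq N s Ω κ u + ∫ x in Ωᶜ, (u x) ^ 2) ≤
            (gagE N s (QSet Ω) u).toReal + ∫ x in Ωᶜ, (u x) ^ 2 ∧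
          (gagE N s (QSet Ω) u).toReal + ∫ x in Ωᶜ, (u x) ^ 2 ≤
            C * (WgNormSq N s Ω κ u + ∫ x in Ωᶜ, (u x) ^ 2) := by
  obtain ⟨C, hC0, hC⟩ := exists_integral_sq_le_gagE_add hN hs0.le hΩb
  obtain ⟨b, hb⟩ := hκ.memLinfty
  have hκb : ∀ᵐ x ∂volume.restrict Ωᶜ, |κ x| ≤ max b 0 := hb.mono fun x hx => by
    rw [abs_of_nonneg (hκ.nonneg x)]
    exact hx.trans (le_max_left b 0)
  refine ⟨(1 + C + max b 0)⁻¹, 1, by positivity, one_pos, fun u ⟨hu, _, _, hG⟩ hE => ?_⟩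
  have hu2 : Integrable (fun x => u x ^ 2) (volume.restrict Ωᶜ) :=
    ⟨(hu.pow_const 2).aestronglyMeasurable,
      (hasFiniteIntegral_iff_ofReal (ae_of_all _ fun _ => sq_nonneg _)).2 hE⟩
  have hL2Ω := hC u hu hG hE
  have hκu := integral_abs_mul_sq_le hκb hu2
  have hG0 : 0 ≤ (gagE N s (QSet Ω) u).toReal := ENNReal.toReal_nonneg
  have hE0 : 0 ≤ ∫ x in Ωᶜ, u x ^ 2 := integral_nonneg fun _ => sq_nonneg _
  have hΩ0 : 0 ≤ ∫ x in Ω, u x ^ 2 := integral_nonneg fun _ => sq_nonneg _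
  have hκu0 : 0 ≤ ∫ x in Ωᶜ, |κ x| * u x ^ 2 := integral_nonneg fun _ => by positivity
  rw [WgNormSq, inv_mul_le_iff₀ (by positivity), one_mul]
  constructor
  · nlinarith [mul_nonneg (le_max_right b 0) hG0]
  · linarith

/-- Under Assumption (A), the quantity
`‖u‖_W² = ∬_Q |u(x)−u(y)|²/|x−y|^{N+2s} dx dy + ∫_{ℝ^N∖Ω} u² dx` defines an equivalent
norm on `W^{s,2}_{Ω,κ} ∩ L²(ℝ^N∖Ω)`. -/
theorem statement15 (N : ℕ) (hN : 1 ≤ N) (s : ℝ) (hs0 : 0 < s) (hs1 : s < 1)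
    (Ω : Set (RN N)) (hΩo : IsOpen Ω) (hΩb : Bornology.IsBounded Ω)
    (hΩl : HasLipschitzBoundary Ω)
    (κ : RN N → ℝ) (hκ : AssumpA Ω κ) :
    ∃ c C : ℝ, 0 < c ∧ 0 < C ∧
      ∀ u : RN N → ℝ, MemWg N s Ω κ u →
        (∫⁻ x in Ωᶜ, ENNReal.ofReal ((u x) ^ 2)) < ⊤ →
        c * (WgNormSq N s Ω κ u + ∫ x in Ωᶜ, (u x) ^ 2) ≤
            (gagE N s (QSet Ω) u).toReal + ∫ x in Ωᶜ, (u x) ^ 2 ∧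
          (gagE N s (QSet Ω) u).toReal + ∫ x in Ωᶜ, (u x) ^ 2 ≤
            C * (WgNormSq N s Ω κ u + ∫ x in Ωᶜ, (u x) ^ 2) :=
  statement15_general N hN s hs0 Ω hΩb κ hκ
end
end
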